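/- arXiv:1406.0347 — 3 statements merged into one kernel-verified Lean document; each statement's English description precedes it below -/
import Mathlib

section
/- Let (G_{n_1},...,G_{n_k}) be a fully interconnected graph decomposition of graphs G_n indexed so that block i grows. If lim_{n_i→∞} P_{G_{n_i},t}^x(x) exists for a vertex x in block i, then lim_{n_i→∞} P_{G_n,t}^x(x) = lim_{n_i→∞} P_{G_{n_i},t}^x(x). -/
open Matrix Finset Filter

/-- CTQW transition probability on a finite simple graph. -/
noncomputable def ctqwP {V : Type*} [Fintype V] [DecidableEq V]
    (G : SimpleGraph V) [DecidableRel G.Adj] (t : ℝ) (x y : V) : ℝ :=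
  ‖(NormedSpace.exp ((Complex.I * t) • (G.lapMatrix ℂ))) x y‖ ^ 2

/-- The induced subgraph of `G` on the `i`-th block. -/
def blockGraph {k : ℕ} {n : Fin k → ℕ} (G : SimpleGraph (Σ i : Fin k, Fin (n i)))
    (i : Fin k) : SimpleGraph (Fin (n i)) where
  Adj a b := G.Adj ⟨i, a⟩ ⟨i, b⟩
  symm := ⟨fun _ _ h => G.adj_symm h⟩
  loopless := ⟨fun _ h => G.loopless.irrefl _ h⟩

def blockGraphDecidable {k : ℕ} {n : Fin k → ℕ} (G : SimpleGraph (Σ i : Fin k, Fin (n i)))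
    (hdec : DecidableRel G.Adj) (i : Fin k) : DecidableRel (blockGraph G i).Adj :=
  fun a b => hdec ⟨i, a⟩ ⟨i, b⟩

open NormedSpace

/-!
Let `X` be the matrix whose column `a` is the indicator of `⟨i, a⟩` minus the uniform average
over block `i`. Every vertex of block `i` has the same number `c` of neighbours outside the
block, and every vertex outside the block is joined to all of it or to none of it; hence
`L_G X = X (L_i + c)`. Exponentiating, `e^{itL_G} X = e^{itc} X e^{itL_i}`, and the entry at
`(⟨i, x⟩, x)` says that the two return amplitudes differ, up to the phase `e^{itc}`, by two block
averages of entries of unitary matrices. By Cauchy–Schwarz each is at most `1/√n_i`, so the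
return probabilities differ by at most `4/√n_i`.
-/

namespace Matrix

variable {𝕜 m p : Type*} [RCLike 𝕜] [Fintype m] [DecidableEq m] [Fintype p] [DecidableEq p]

theorem exp_mul_eq_mul_exp_of_mul_eq {A : Matrix m m 𝕜} {B : Matrix p p 𝕜} {X : Matrix m p 𝕜}
    (h : A * X = X * B) : exp A * X = X * exp B := by
  have hpow (j : ℕ) : A ^ j * X = X * B ^ j := by
    induction j with
    | zero => simp
    | succ j ih =>
      rw [pow_succ, Matrix.mul_assoc, h, ← Matrix.mul_assoc, ih, Matrix.mul_assoc, ← pow_succ]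
  have hA : HasSum (fun j : ℕ => ((j.factorial : 𝕜)⁻¹ • A ^ j) * X) (exp A * X) := by
    open scoped Norms.Operator in
    exact (exp_series_hasSum_exp' A).map (mulRightLinearMap m 𝕜 X)
      (continuous_id.matrix_mul continuous_const)
  have hB : HasSum (fun j : ℕ => X * ((j.factorial : 𝕜)⁻¹ • B ^ j)) (X * exp B) := by
    open scoped Norms.Operator in
    exact (exp_series_hasSum_exp' B).map (mulLeftLinearMap p 𝕜 X)
      (continuous_const.matrix_mul continuous_id)
  refine hA.unique ?_
  simpa only [Matrix.smul_mul, Matrix.mul_smul, hpow] using hB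

theorem exp_add_smul_one (A : Matrix m m 𝕜) (z : 𝕜) : exp (A + z • 1) = exp z • exp A := by
  have hz : exp (algebraMap 𝕜 (Matrix m m 𝕜) z) = algebraMap 𝕜 _ (exp z) := by
    open scoped Norms.Operator in exact (algebraMap_exp_comm z).symm
  rw [← Algebra.algebraMap_eq_smul_one, exp_add_of_commute _ _ (Algebra.commutes z A).symm, hz,
    Algebra.algebraMap_eq_smul_one, Matrix.mul_smul, Matrix.mul_one]

theorem IsHermitian.exp_I_mul_smul_mem_unitaryGroup {A : Matrix m m ℂ} (hA : A.IsHermitian)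
    (t : ℝ) : NormedSpace.exp ((Complex.I * t) • A) ∈ unitaryGroup m ℂ := by
  set S := (Complex.I * t) • A
  have hskew : Sᴴ = -S := by
    rw [conjTranspose_smul, hA.eq, ← neg_smul]
    simp
  rw [Unitary.mem_iff, star_eq_conjTranspose, ← exp_conjTranspose, hskew,
    ← exp_add_of_commute _ _ (Commute.refl S).neg_left,
    ← exp_add_of_commute _ _ (Commute.refl S).neg_right, neg_add_cancel, add_neg_cancel,
    exp_zero, and_self]

theorem sum_norm_sq_row_eq_one_of_mem_unitaryGroup {U : Matrix m m 𝕜}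
    (hU : U ∈ unitaryGroup m 𝕜) (v : m) : ∑ w, ‖U v w‖ ^ 2 = 1 := by
  have h : (U * Uᴴ) v v = 1 := by
    rw [← star_eq_conjTranspose, Unitary.mul_star_self_of_mem hU, one_apply_eq]
  simp only [mul_apply, conjTranspose_apply, ← starRingEnd_apply, RCLike.mul_conj] at h
  exact_mod_cast h

theorem sum_norm_sq_col_eq_one_of_mem_unitaryGroup {U : Matrix m m 𝕜}
    (hU : U ∈ unitaryGroup m 𝕜) (w : m) : ∑ v, ‖U v w‖ ^ 2 = 1 := by
  simpa using sum_norm_sq_row_eq_one_of_mem_unitaryGroup (Unitary.star_mem hU) w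

end Matrix

theorem norm_inv_natCast_mul_sum_le {𝕜 : Type*} [RCLike 𝕜] {N : ℕ} (f : Fin N → 𝕜)
    (hf : ∑ b, ‖f b‖ ^ 2 ≤ 1) : ‖(N : 𝕜)⁻¹ * ∑ b, f b‖ ≤ (√N)⁻¹ := by
  have hsum : ∑ b, ‖f b‖ ≤ √N := by
    refine Real.le_sqrt_of_sq_le ?_
    calc (∑ b, ‖f b‖) ^ 2 ≤ N * ∑ b, ‖f b‖ ^ 2 := by
          simpa using sq_sum_le_card_mul_sum_sq (s := univ) (f := fun b => ‖f b‖)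
      _ ≤ N := mul_le_of_le_one_right (Nat.cast_nonneg N) hf
  calc ‖(N : 𝕜)⁻¹ * ∑ b, f b‖ ≤ (N : ℝ)⁻¹ * √N := by
        rw [norm_mul, norm_inv, RCLike.norm_natCast]
        gcongr
        exact (norm_sum_le _ _).trans hsum
    _ = (√N)⁻¹ := by rw [inv_mul_eq_div, Real.sqrt_div_self]

theorem abs_norm_sq_sub_norm_sq_le {E : Type*} [SeminormedAddCommGroup E] {a b : E}
    (ha : ‖a‖ ≤ 1) (hb : ‖b‖ ≤ 1) : |‖a‖ ^ 2 - ‖b‖ ^ 2| ≤ 2 * ‖a - b‖ := by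
  rw [sq_sub_sq, abs_mul, abs_of_nonneg (by positivity)]
  gcongr
  · linarith
  · exact abs_norm_sub_norm_le a b

namespace SimpleGraph

variable {V S : Type*} [Fintype V] [DecidableEq V] [Ring S] (G : SimpleGraph V)
  [DecidableRel G.Adj]

theorem lapMatrix_apply_self (v : V) : G.lapMatrix S v v = G.degree v := by
  simp [lapMatrix, degMatrix]

theorem lapMatrix_apply_of_ne {v w : V} (h : v ≠ w) :
    G.lapMatrix S v w = -(if G.Adj v w then 1 else 0) := by
  simp [lapMatrix, degMatrix, h]

theorem sum_lapMatrix_row_eq_zero (v : V) : ∑ w, G.lapMatrix S v w = 0 := by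
  simpa [mulVec, dotProduct] using congrFun (G.lapMatrix_mulVec_const_eq_zero (R := S)) v

theorem sum_lapMatrix_col_eq_zero (w : V) : ∑ v, G.lapMatrix S v w = 0 := by
  simpa [(G.isSymm_lapMatrix S).apply w] using G.sum_lapMatrix_row_eq_zero w

end SimpleGraph

section Blocks

variable {k : ℕ} {n : Fin k → ℕ}

def IsFullyInterconnected (G : SimpleGraph (Σ j : Fin k, Fin (n j))) (R : Fin k → Fin k → Prop) :
    Prop :=
  ∀ v w : Σ j : Fin k, Fin (n j), v.1 ≠ w.1 → (G.Adj v w ↔ R v.1 w.1)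

def crossDegree (n : Fin k → ℕ) (R : Fin k → Fin k → Prop) [DecidableRel R] (i : Fin k) : ℕ :=
  ∑ j ∈ {i}ᶜ, if R i j then n j else 0

variable {S : Type*} [Ring S] {G : SimpleGraph (Σ j : Fin k, Fin (n j))} [DecidableRel G.Adj]
  {R : Fin k → Fin k → Prop} [DecidableRel R] {i : Fin k}

theorem IsFullyInterconnected.degree_sigma_mk [DecidableRel (blockGraph G i).Adj]
    (hG : IsFullyInterconnected G R) (b : Fin (n i)) :
    G.degree ⟨i, b⟩ = (blockGraph G i).degree b + crossDegree n R i := by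
  rw [← Nat.cast_id (G.degree _), SimpleGraph.degree_eq_sum_if_adj, Fintype.sum_sigma,
    Fintype.sum_eq_add_sum_compl i, ← Nat.cast_id ((blockGraph G i).degree b),
    SimpleGraph.degree_eq_sum_if_adj, crossDegree]
  congr 1
  · exact Finset.sum_congr rfl fun _ _ => if_congr Iff.rfl rfl rfl
  · refine Finset.sum_congr rfl fun j hj => ?_
    have hji : i ≠ j := fun h => Finset.mem_compl.mp hj (Finset.mem_singleton.mpr h.symm)
    simp only [hG ⟨i, b⟩ ⟨j, _⟩ hji]
    split_ifs <;> simp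

theorem IsFullyInterconnected.lapMatrix_sigma_mk_self [DecidableRel (blockGraph G i).Adj]
    (hG : IsFullyInterconnected G R) (b a : Fin (n i)) :
    G.lapMatrix S ⟨i, b⟩ ⟨i, a⟩
      = ((blockGraph G i).lapMatrix S + (crossDegree n R i : S) • 1) b a := by
  rcases eq_or_ne b a with rfl | hba
  · simp [SimpleGraph.lapMatrix_apply_self, hG.degree_sigma_mk]
  · have hne : (⟨i, b⟩ : Σ j : Fin k, Fin (n j)) ≠ ⟨i, a⟩ := by simpa using hba
    rw [SimpleGraph.lapMatrix_apply_of_ne _ hne, Matrix.add_apply,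
      SimpleGraph.lapMatrix_apply_of_ne _ hba, Matrix.smul_apply, one_apply_ne hba, smul_zero,
      add_zero]
    exact congrArg Neg.neg (if_congr Iff.rfl rfl rfl)

theorem IsFullyInterconnected.lapMatrix_sigma_mk_of_ne (hG : IsFullyInterconnected G R)
    {j : Fin k} (hj : j ≠ i) (b : Fin (n j)) (a : Fin (n i)) :
    G.lapMatrix S ⟨j, b⟩ ⟨i, a⟩ = -(if R j i then 1 else 0) := by
  rw [SimpleGraph.lapMatrix_apply_of_ne _ (fun h => hj (congrArg Sigma.fst h))]
  exact congrArg Neg.neg (if_congr (hG _ _ hj) rfl rfl)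

end Blocks

section Centering

variable {k : ℕ} (n : Fin k → ℕ) (i : Fin k)

noncomputable def blockCentering : Matrix (Σ j : Fin k, Fin (n j)) (Fin (n i)) ℂ :=
  of fun v a => (if v = ⟨i, a⟩ then 1 else 0) - if v.1 = i then (n i : ℂ)⁻¹ else 0

variable {n i}

theorem mul_blockCentering_apply {ι : Type*} (M : Matrix ι (Σ j : Fin k, Fin (n j)) ℂ) (v : ι)
    (a : Fin (n i)) :
    (M * blockCentering n i) v a = M v ⟨i, a⟩ - (n i : ℂ)⁻¹ * ∑ b, M v ⟨i, b⟩ := by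
  simp [mul_apply, blockCentering, mul_sub, Finset.sum_sub_distrib, Fintype.sum_sigma,
    Finset.mul_sum, mul_comm]

theorem blockCentering_mul_apply_self {κ : Type*} (M : Matrix (Fin (n i)) κ ℂ) (b : Fin (n i))
    (c : κ) :
    (blockCentering n i * M) ⟨i, b⟩ c = M b c - (n i : ℂ)⁻¹ * ∑ b', M b' c := by
  simp [mul_apply, blockCentering, sub_mul, Finset.sum_sub_distrib, Finset.mul_sum]

theorem blockCentering_mul_apply_of_ne {κ : Type*} (M : Matrix (Fin (n i)) κ ℂ) {j : Fin k}
    (hj : j ≠ i) (b : Fin (n j)) (c : κ) : (blockCentering n i * M) ⟨j, b⟩ c = 0 := by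
  simp [mul_apply, blockCentering, hj]

end Centering

section Comparison

variable {k : ℕ} {n : Fin k → ℕ} {G : SimpleGraph (Σ j : Fin k, Fin (n j))} [DecidableRel G.Adj]
  {R : Fin k → Fin k → Prop} [DecidableRel R] {i : Fin k} [DecidableRel (blockGraph G i).Adj]

theorem IsFullyInterconnected.lapMatrix_mul_blockCentering (hG : IsFullyInterconnected G R) :
    G.lapMatrix ℂ * blockCentering n i
      = blockCentering n i * ((blockGraph G i).lapMatrix ℂ + (crossDegree n R i : ℂ) • 1) := by
  ext ⟨j, b⟩ a
  have hn : (n i : ℂ) ≠ 0 := Nat.cast_ne_zero.mpr a.pos.ne'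
  rw [mul_blockCentering_apply]
  rcases eq_or_ne j i with rfl | hj
  · simp [blockCentering_mul_apply_self, hG.lapMatrix_sigma_mk_self, Finset.sum_add_distrib,
      SimpleGraph.sum_lapMatrix_row_eq_zero, SimpleGraph.sum_lapMatrix_col_eq_zero, one_apply]
  · simp only [blockCentering_mul_apply_of_ne _ hj, hG.lapMatrix_sigma_mk_of_ne hj,
      Finset.sum_const, Finset.card_univ, Fintype.card_fin, nsmul_eq_mul]
    field_simp
    ring

theorem IsFullyInterconnected.exp_lapMatrix_mul_blockCentering (hG : IsFullyInterconnected G R)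
    (t : ℝ) :
    exp ((Complex.I * t) • G.lapMatrix ℂ) * blockCentering n i
      = Complex.exp (Complex.I * t * crossDegree n R i)
        • (blockCentering n i * exp ((Complex.I * t) • (blockGraph G i).lapMatrix ℂ)) := by
  rw [exp_mul_eq_mul_exp_of_mul_eq (B := (Complex.I * t) • ((blockGraph G i).lapMatrix ℂ
      + (crossDegree n R i : ℂ) • 1)) (by rw [Matrix.smul_mul, Matrix.mul_smul,
      hG.lapMatrix_mul_blockCentering]),
    smul_add, smul_smul, exp_add_smul_one, Matrix.mul_smul, Complex.exp_eq_exp_ℂ]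

theorem IsFullyInterconnected.abs_ctqwP_sub_ctqwP_blockGraph_le (hG : IsFullyInterconnected G R)
    (x : Fin (n i)) (t : ℝ) :
    |ctqwP G t ⟨i, x⟩ ⟨i, x⟩ - ctqwP (blockGraph G i) t x x| ≤ 4 / √(n i) := by
  set U := exp ((Complex.I * t) • G.lapMatrix ℂ)
  set u := exp ((Complex.I * t) • (blockGraph G i).lapMatrix ℂ)
  set e := Complex.exp (Complex.I * t * crossDegree n R i)
  have hU : U ∈ unitaryGroup _ ℂ := (G.isHermitian_lapMatrix ℂ).exp_I_mul_smul_mem_unitaryGroup t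
  have hu : u ∈ unitaryGroup _ ℂ :=
    ((blockGraph G i).isHermitian_lapMatrix ℂ).exp_I_mul_smul_mem_unitaryGroup t
  have he : ‖e‖ = 1 := by simp [e, Complex.norm_exp]
  have hentry := congrFun₂ (hG.exp_lapMatrix_mul_blockCentering t) ⟨i, x⟩ x
  rw [mul_blockCentering_apply, Matrix.smul_apply, blockCentering_mul_apply_self,
    smul_eq_mul] at hentry
  have hrow : ‖(n i : ℂ)⁻¹ * ∑ b, U ⟨i, x⟩ ⟨i, b⟩‖ ≤ (√(n i))⁻¹ := by
    refine norm_inv_natCast_mul_sum_le _ ?_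
    rw [← sum_norm_sq_row_eq_one_of_mem_unitaryGroup hU ⟨i, x⟩, Fintype.sum_sigma]
    exact Finset.single_le_sum (f := fun j => ∑ b, ‖U ⟨i, x⟩ ⟨j, b⟩‖ ^ 2)
      (fun _ _ => by positivity) (Finset.mem_univ i)
  have hcol : ‖(n i : ℂ)⁻¹ * ∑ b, u b x‖ ≤ (√(n i))⁻¹ :=
    norm_inv_natCast_mul_sum_le _ (sum_norm_sq_col_eq_one_of_mem_unitaryGroup hu x).le
  have hdiff : ‖U ⟨i, x⟩ ⟨i, x⟩ - e * u x x‖ ≤ 2 / √(n i) := calc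
    _ = ‖(n i : ℂ)⁻¹ * ∑ b, U ⟨i, x⟩ ⟨i, b⟩ - e * ((n i : ℂ)⁻¹ * ∑ b, u b x)‖ := by
        congr 1; linear_combination hentry
    _ ≤ ‖(n i : ℂ)⁻¹ * ∑ b, U ⟨i, x⟩ ⟨i, b⟩‖ + ‖(n i : ℂ)⁻¹ * ∑ b, u b x‖ := by
        rw [← one_mul ‖_ * ∑ b, u b x‖, ← he, ← norm_mul]
        exact norm_sub_le _ _
    _ ≤ (√(n i))⁻¹ + (√(n i))⁻¹ := add_le_add hrow hcol
    _ = 2 / √(n i) := by ring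
  have hnorm : ‖e * u x x‖ = ‖u x x‖ := by rw [norm_mul, he, one_mul]
  calc |ctqwP G t ⟨i, x⟩ ⟨i, x⟩ - ctqwP (blockGraph G i) t x x|
      = |‖U ⟨i, x⟩ ⟨i, x⟩‖ ^ 2 - ‖e * u x x‖ ^ 2| := by rw [hnorm]; rfl
    _ ≤ 2 * ‖U ⟨i, x⟩ ⟨i, x⟩ - e * u x x‖ :=
        abs_norm_sq_sub_norm_sq_le (entry_norm_bound_of_unitary hU _ _)
          (hnorm ▸ entry_norm_bound_of_unitary hu _ _)
    _ ≤ 2 * (2 / √(n i)) := by gcongr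
    _ = 4 / √(n i) := by ring

end Comparison

theorem ctqw_return_probability_limit_general
    {k : ℕ} (n : ℕ → Fin k → ℕ)
    (G : (m : ℕ) → SimpleGraph (Σ i : Fin k, Fin (n m i)))
    (hdec : ∀ m, DecidableRel (G m).Adj)
    (R : ℕ → Fin k → Fin k → Prop) (hRdec : ∀ m, DecidableRel (R m))
    (hcross : ∀ m, ∀ v w : Σ i : Fin k, Fin (n m i),
      v.1 ≠ w.1 → ((G m).Adj v w ↔ R m v.1 w.1))
    (i : Fin k) (hgrow : Tendsto (fun m => n m i) atTop atTop)
    (x : (m : ℕ) → Fin (n m i)) (t : ℝ) (L : ℝ)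
    (hlim : Tendsto (fun m =>
        @ctqwP _ _ _ (blockGraph (G m) i) (blockGraphDecidable (G m) (hdec m) i) t (x m) (x m)) atTop (nhds L)) :
    Tendsto (fun m => @ctqwP _ _ _ (G m) (hdec m) t ⟨i, x m⟩ ⟨i, x m⟩) atTop (nhds L) := by
  have hbound (m : ℕ) : dist (@ctqwP _ _ _ (blockGraph (G m) i)
      (blockGraphDecidable (G m) (hdec m) i) t (x m) (x m))
      (@ctqwP _ _ _ (G m) (hdec m) t ⟨i, x m⟩ ⟨i, x m⟩) ≤ 4 / √(n m i) := by
    let := hdec m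
    let := hRdec m
    let := blockGraphDecidable (G m) (hdec m) i
    rw [Real.dist_eq, abs_sub_comm]
    exact IsFullyInterconnected.abs_ctqwP_sub_ctqwP_blockGraph_le (hcross m) (x m) t
  have hdecay : Tendsto (fun m => 4 / √(n m i)) atTop (nhds 0) :=
    tendsto_const_nhds.div_atTop
      (Real.tendsto_sqrt_atTop.comp (tendsto_natCast_atTop_atTop.comp hgrow))
  exact tendsto_of_tendsto_of_dist hlim (squeeze_zero (fun _ => dist_nonneg) hbound hdecay)

/-- If the return probability of the CTQW on the growing block converges, the return
probability on the whole graph converges to the same limit. -/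
theorem ctqw_return_probability_limit
    {k : ℕ} (n : ℕ → Fin k → ℕ)
    (G : (m : ℕ) → SimpleGraph (Σ i : Fin k, Fin (n m i)))
    (hdec : ∀ m, DecidableRel (G m).Adj)
    (R : ℕ → Fin k → Fin k → Prop) (hRdec : ∀ m, DecidableRel (R m))
    (hcross : ∀ m, ∀ v w : Σ i : Fin k, Fin (n m i),
      v.1 ≠ w.1 → ((G m).Adj v w ↔ R m v.1 w.1))
    (i : Fin k) (hgrow : Tendsto (fun m => n m i) atTop atTop)
    (x : (m : ℕ) → Fin (n m i)) (t : ℝ) (ht : 0 ≤ t) (L : ℝ)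
    (hlim : Tendsto (fun m =>
        @ctqwP _ _ _ (blockGraph (G m) i) (blockGraphDecidable (G m) (hdec m) i) t (x m) (x m)) atTop (nhds L)) :
    Tendsto (fun m => @ctqwP _ _ _ (G m) (hdec m) t ⟨i, x m⟩ ⟨i, x m⟩) atTop (nhds L) :=
  ctqw_return_probability_limit_general n G hdec R hRdec hcross i hgrow x t L hlim
end

section
/- Let G_n be a simple graph on n vertices and let x be a dominating vertex (a vertex adjacent to all other n−1 vertices). Then for all t and all vertices y, P_{G_n,t}^x(y) = 1 − (2/n)(1 − 1/n)(1 − cos nt) if y = x, and P_{G_n,t}^x(y) = (2/n^2)(1 − cos nt) if y ≠ x. In particular P_{G_n,t}^x(y) does not depend on the structure of G_n beyond n. -/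
/-!
Since `x` is adjacent to every other vertex, the Laplacian sends `e_x` to `n • e_x - 𝟙`; as
`L 𝟙 = 0`, the vector `n • e_x - 𝟙` is an eigenvector of `L` for the eigenvalue `n`. Splitting
`n • e_x = 𝟙 + (n • e_x - 𝟙)` along these eigenvectors gives
`n • exp (c L) e_x = 𝟙 + exp (c n) (n • e_x - 𝟙)`, and by symmetry of `exp (c L)` this column is
the row of `x`. For `c = i t` its entries are `(1 + (n - 1) e^{int}) / n` at `x` and
`(1 - e^{int}) / n` elsewhere, whatever the rest of the graph.
-/

open Matrix

open NormedSpace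

namespace Matrix

variable {m : Type*} [Fintype m] [DecidableEq m]

theorem pow_mulVec_of_mulVec_eq_smul {R : Type*} [CommSemiring R] {A : Matrix m m R}
    {v : m → R} {μ : R} (h : A *ᵥ v = μ • v) (k : ℕ) : A ^ k *ᵥ v = μ ^ k • v := by
  induction k with
  | zero => simp
  | succ k ih => rw [pow_succ', ← mulVec_mulVec, ih, mulVec_smul, h, smul_smul, pow_succ]

open scoped Norms.Operator in
theorem exp_mulVec_of_mulVec_eq_smul {𝕂 : Type*} [RCLike 𝕂] {A : Matrix m m 𝕂} {v : m → 𝕂}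
    {μ : 𝕂} (h : A *ᵥ v = μ • v) : exp A *ᵥ v = exp μ • v := by
  let applyTo : Matrix m m 𝕂 →ₗ[𝕂] m → 𝕂 := LinearMap.applyₗ v ∘ₗ toLin'.toLinearMap
  have hA := (exp_series_hasSum_exp' (𝕂 := 𝕂) A).map applyTo
    applyTo.continuous_of_finiteDimensional
  refine hA.unique ?_
  convert (exp_series_hasSum_exp' (𝕂 := 𝕂) μ).smul_const v using 2 with k
  change ((k.factorial : 𝕂)⁻¹ • A ^ k) *ᵥ v = _
  rw [smul_mulVec, pow_mulVec_of_mulVec_eq_smul h, smul_smul, smul_eq_mul]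

end Matrix

namespace SimpleGraph

variable {V : Type*} [Fintype V] [DecidableEq V] (G : SimpleGraph V) [DecidableRel G.Adj]

theorem lapMatrix_mulVec_single_of_isUniversal {R : Type*} [NonAssocRing R] {x : V}
    (hx : G.IsUniversal x) :
    G.lapMatrix R *ᵥ Pi.single x 1 = (Fintype.card V : R) • Pi.single x 1 - fun _ ↦ 1 := by
  ext v
  rw [lapMatrix_mulVec_apply]
  obtain rfl | hv := eq_or_ne v x
  · have hdeg : (G.degree v : R) = Fintype.card V - 1 := by
      rw [(G.degree_eq_card_sub_one v).mpr hx, Nat.cast_pred (Fintype.card_pos_iff.mpr ⟨v⟩)]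
    have hsum : ∑ u ∈ G.neighborFinset v, (Pi.single v 1 : V → R) u = 0 :=
      Finset.sum_eq_zero fun u hu ↦
        Pi.single_eq_of_ne (G.ne_of_adj (G.mem_neighborFinset v u |>.mp hu)).symm 1
    simp [hdeg, hsum]
  · have hxv : x ∈ G.neighborFinset v := (G.mem_neighborFinset v x).mpr (hx hv.symm).symm
    have hsum : ∑ u ∈ G.neighborFinset v, (Pi.single x 1 : V → R) u = 1 := by
      rw [Finset.sum_eq_single_of_mem x hxv fun u _ hu ↦ Pi.single_eq_of_ne hu 1,
        Pi.single_eq_same]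
    simp [hv, hsum]

theorem exp_smul_lapMatrix_apply_of_isUniversal {𝕂 : Type*} [RCLike 𝕂] {x : V}
    (hx : G.IsUniversal x) (c : 𝕂) (y : V) :
    exp (c • G.lapMatrix 𝕂) x y =
      if y = x then (1 + (Fintype.card V - 1) * exp (c * Fintype.card V)) / Fintype.card V
      else (1 - exp (c * Fintype.card V)) / Fintype.card V := by
  set n : 𝕂 := (Fintype.card V : 𝕂)
  set L := G.lapMatrix 𝕂
  set e : V → 𝕂 := Pi.single x 1
  set one : V → 𝕂 := fun _ ↦ 1
  set w := n • e - one
  have hL1 : L *ᵥ one = 0 := G.lapMatrix_mulVec_const_eq_zero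
  have hLw : L *ᵥ w = n • w := by
    rw [mulVec_sub, mulVec_smul, G.lapMatrix_mulVec_single_of_isUniversal hx, hL1, sub_zero]
  have hexp1 : exp (c • L) *ᵥ one = one := by
    simpa using exp_mulVec_of_mulVec_eq_smul (μ := 0) (A := c • L) (v := one)
      (by rw [smul_mulVec, hL1, smul_zero, zero_smul])
  have hexpw : exp (c • L) *ᵥ w = exp (c * n) • w :=
    exp_mulVec_of_mulVec_eq_smul (by rw [smul_mulVec, hLw, smul_smul])
  have hcol : n • (exp (c • L) *ᵥ e) = one + exp (c * n) • w := by
    rw [← mulVec_smul, ← add_sub_cancel one (n • e), mulVec_add, hexp1, hexpw]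
  have hrow : exp (c • L) x y = (exp (c • L) *ᵥ e) y := by
    rw [mulVec_single_one, col_apply, ((G.isSymm_lapMatrix (R := 𝕂)).smul c).exp.apply y x]
  have hn : n ≠ 0 := Nat.cast_ne_zero.mpr (Fintype.card_pos_iff.mpr ⟨x⟩).ne'
  have hentry : exp (c • L) x y * n = 1 + exp (c * n) * (n * e y - 1) := by
    simpa [hrow, w, one, mul_comm] using congrFun hcol y
  split_ifs with hyx <;> rw [eq_div_iff hn, hentry]
  · simp only [e, hyx, Pi.single_eq_same]
    ring
  · simp only [e, Pi.single_eq_of_ne hyx]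
    ring

end SimpleGraph

theorem Complex.sq_norm_ofReal_add_ofReal_mul_exp_mul_I (a b θ : ℝ) :
    ‖(a + b * exp (θ * I) : ℂ)‖ ^ 2 = a ^ 2 + b ^ 2 + 2 * a * b * Real.cos θ := by
  rw [Complex.sq_norm, normSq_apply, exp_mul_I, ← ofReal_cos, ← ofReal_sin]
  simp only [add_re, add_im, mul_re, mul_im, ofReal_re, ofReal_im, I_re, I_im]
  nlinarith [Real.sin_sq_add_cos_sq θ]

/-- The CTQW started at a dominating vertex has explicit transition probabilities
depending only on `n`. -/
theorem ctqw_dominating_vertex (n : ℕ) (G : SimpleGraph (Fin n)) [DecidableRel G.Adj]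
    (x : Fin n) (hx : G.degree x = n - 1) (t : ℝ) (y : Fin n) :
    ctqwP G t x y =
      if y = x then 1 - (2 / n) * (1 - 1 / n) * (1 - Real.cos (n * t))
      else (2 / (n : ℝ) ^ 2) * (1 - Real.cos (n * t)) := by
  have hxu : G.IsUniversal x := (G.degree_eq_card_sub_one x).mp (by rwa [Fintype.card_fin])
  have hn : (n : ℝ) ≠ 0 := Nat.cast_ne_zero.mpr x.pos.ne'
  have hθ : Complex.I * t * n = ((n * t : ℝ) : ℂ) * Complex.I := by push_cast; ring
  have hnorm : ∀ b : ℝ, ‖(1 + b * Complex.exp ((n * t : ℝ) * Complex.I)) / n‖ ^ 2 =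
      (1 + b ^ 2 + 2 * b * Real.cos (n * t)) / n ^ 2 := fun b ↦ by
    rw [norm_div, div_pow, Complex.norm_natCast, ← Complex.ofReal_one,
      Complex.sq_norm_ofReal_add_ofReal_mul_exp_mul_I, one_pow, mul_one]
  rw [ctqwP, G.exp_smul_lapMatrix_apply_of_isUniversal hxu, Fintype.card_fin,
    ← Complex.exp_eq_exp_ℂ, hθ]
  split_ifs
  · rw [show (n - 1 : ℂ) = (n - 1 : ℝ) by push_cast; rfl, hnorm]
    field_simp
    ring
  · rw [sub_eq_add_neg, ← neg_one_mul, show (-1 : ℂ) = (-1 : ℝ) by push_cast; rfl, hnorm]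
    field_simp
    ring
end

section
/- Let G be a simple graph on n vertices with a dominating vertex x. Then for any time t, the off-diagonal transition probability from x satisfies P_{G,t}^x(y) ≤ 4/n^2 for all y ≠ x, and hence the probability of being away from x satisfies Σ_{y≠x} P_{G,t}^x(y) ≤ 4/n. -/
/-!
If `x` is adjacent to every other vertex of an `n`-vertex graph, then `L e_x = n e_x - 𝟙` and
`L 𝟙 = 0`, so `e_x = (e_x - 𝟙/n) + 𝟙/n` splits into eigenvectors of `L` for the eigenvalues `n`
and `0`. Hence the off-diagonal entries of column `x` of `exp (i t L)` all equal
`(1 - exp (i n t)) / n`, whose squared modulus is `2 (1 - cos (n t)) / n² ≤ 4 / n²`; by symmetry of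
`L` the same holds for row `x`. Summing over the `n - 1` other vertices gives `4 / n`.
-/

open Matrix Finset

open NormedSpace

section

attribute [local instance] Matrix.linftyOpNormedRing Matrix.linftyOpNormedAlgebra

theorem Matrix.exp_mulVec_of_mulVec_eq_smul_s19 {𝕂 m : Type*} [RCLike 𝕂] [Fintype m]
    [DecidableEq m] {A : Matrix m m 𝕂} {v : m → 𝕂} {c : 𝕂} (h : A *ᵥ v = c • v) :
    exp A *ᵥ v = exp c • v := by
  have hpow (k : ℕ) : A ^ k *ᵥ v = c ^ k • v := by
    induction k with
    | zero => simp
    | succ k ih => rw [pow_succ, ← mulVec_mulVec, h, mulVec_smul, ih, smul_smul, ← pow_succ']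
  have hA := (exp_series_hasSum_exp' (𝕂 := 𝕂) A).map (mulVec.addMonoidHomLeft v)
    (continuous_id.matrix_mulVec continuous_const)
  refine hA.unique ?_
  convert (exp_series_hasSum_exp' (𝕂 := 𝕂) c).smul_const v using 2 with k
  simp [mulVec.addMonoidHomLeft, smul_mulVec, hpow, smul_smul]

end

theorem Complex.norm_exp_I_mul_ofReal_sub_one_sq (θ : ℝ) :
    ‖Complex.exp (Complex.I * θ) - 1‖ ^ 2 = 2 * (1 - Real.cos θ) := by
  rw [Complex.sq_norm, Complex.normSq_apply, mul_comm Complex.I, Complex.exp_mul_I]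
  simp only [Complex.sub_re, Complex.sub_im, Complex.add_re, Complex.add_im, Complex.mul_re,
    Complex.mul_im, ← Complex.ofReal_cos, ← Complex.ofReal_sin, Complex.ofReal_re,
    Complex.ofReal_im, Complex.I_re, Complex.I_im, Complex.one_re, Complex.one_im]
  linear_combination Real.sin_sq_add_cos_sq θ

theorem ctqwP_comm {V : Type*} [Fintype V] [DecidableEq V] (G : SimpleGraph V)
    [DecidableRel G.Adj] (t : ℝ) (x y : V) : ctqwP G t x y = ctqwP G t y x := by
  have hsymm := ((G.isSymm_lapMatrix (R := ℂ)).smul (Complex.I * t)).exp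
  unfold ctqwP
  rw [← hsymm.apply y x]

namespace SimpleGraph

variable {V : Type*} [Fintype V] [DecidableEq V] {G : SimpleGraph V} [DecidableRel G.Adj]
  {x : V}

theorem IsUniversal.lapMatrix_mulVec_single {R : Type*} [NonAssocRing R]
    (hx : G.IsUniversal x) :
    G.lapMatrix R *ᵥ Pi.single x 1 = (Fintype.card V : R) • Pi.single x 1 - fun _ ↦ 1 := by
  have hdeg : G.degree x = Fintype.card V - 1 := (G.degree_eq_card_sub_one x).mpr hx
  have hcard : 1 ≤ Fintype.card V := Fintype.card_pos_iff.mpr ⟨x⟩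
  ext y
  rw [lapMatrix_mulVec_apply, Finset.sum_pi_single']
  rcases eq_or_ne y x with rfl | hy
  · simp [hdeg, Nat.cast_sub hcard]
  · simp [hy, (hx hy.symm).symm]

theorem IsUniversal.exp_smul_lapMatrix_apply {𝕂 : Type*} [RCLike 𝕂] (hx : G.IsUniversal x)
    (z : 𝕂) {y : V} (hy : y ≠ x) :
    exp (z • G.lapMatrix 𝕂) y x = (1 - exp (z * Fintype.card V)) / Fintype.card V := by
  set n : 𝕂 := (Fintype.card V : 𝕂)
  have hn : n ≠ 0 := Nat.cast_ne_zero.mpr (Fintype.card_pos_iff.mpr ⟨x⟩).ne'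
  set ones : V → 𝕂 := fun _ ↦ 1
  set u : V → 𝕂 := Pi.single x 1 - n⁻¹ • ones
  have hu : (z • G.lapMatrix 𝕂) *ᵥ u = (z * n) • u := by
    rw [smul_mulVec, mulVec_sub, mulVec_smul, hx.lapMatrix_mulVec_single,
      lapMatrix_mulVec_const_eq_zero]
    ext w
    simp only [u, Pi.smul_apply, Pi.sub_apply, smul_eq_mul, Pi.zero_apply]
    field_simp
    ring
  have hones : (z • G.lapMatrix 𝕂) *ᵥ ones = (0 : 𝕂) • ones := by
    rw [smul_mulVec, lapMatrix_mulVec_const_eq_zero, smul_zero, zero_smul]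
  have hsplit : Pi.single x 1 = u + n⁻¹ • ones := by simp [u]
  have hcol := congrFun (mulVec_single_one (exp (z • G.lapMatrix 𝕂)) x) y
  rw [hsplit, mulVec_add, mulVec_smul, exp_mulVec_of_mulVec_eq_smul_s19 hu,
    exp_mulVec_of_mulVec_eq_smul_s19 hones, exp_zero, one_smul] at hcol
  rw [col_apply] at hcol
  rw [← hcol]
  simp only [Pi.add_apply, Pi.smul_apply, Pi.sub_apply, Pi.single_eq_of_ne hy, smul_eq_mul,
    mul_one, zero_sub, mul_neg, u, ones]
  field_simp
  ring

theorem IsUniversal.ctqwP_eq (hx : G.IsUniversal x) (t : ℝ) {y : V} (hy : y ≠ x) :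
    ctqwP G t x y = 2 / (Fintype.card V : ℝ) ^ 2 * (1 - Real.cos (Fintype.card V * t)) := by
  have harg : Complex.I * t * (Fintype.card V : ℂ) =
      Complex.I * ((Fintype.card V * t : ℝ) : ℂ) := by
    push_cast
    ring
  rw [ctqwP_comm, ctqwP, hx.exp_smul_lapMatrix_apply _ hy, ← Complex.exp_eq_exp_ℂ, harg,
    norm_div, norm_sub_rev, div_pow, Complex.norm_exp_I_mul_ofReal_sub_one_sq, Complex.norm_natCast]
  ring

end SimpleGraph

/-- From a dominating vertex, each off-diagonal transition probability is at most `4/n²`,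
and the total probability of being away from the start is at most `4/n`. -/
theorem ctqw_dominating_offdiag_bound (n : ℕ) (G : SimpleGraph (Fin n))
    [DecidableRel G.Adj] (x : Fin n) (hx : G.degree x = n - 1) (t : ℝ) :
    (∀ y : Fin n, y ≠ x → ctqwP G t x y ≤ 4 / (n : ℝ) ^ 2) ∧
    ∑ y ∈ Finset.univ.erase x, ctqwP G t x y ≤ 4 / (n : ℝ) := by
  have hxu : G.IsUniversal x := (G.degree_eq_card_sub_one x).mp (by rwa [Fintype.card_fin])
  have hn : (0 : ℝ) < n := by exact_mod_cast x.pos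
  have hbound (y : Fin n) (hy : y ≠ x) : ctqwP G t x y ≤ 4 / (n : ℝ) ^ 2 := by
    rw [hxu.ctqwP_eq t hy, Fintype.card_fin]
    have := Real.neg_one_le_cos (n * t)
    calc 2 / (n : ℝ) ^ 2 * (1 - Real.cos (n * t)) ≤ 2 / (n : ℝ) ^ 2 * 2 := by gcongr; linarith
      _ = 4 / (n : ℝ) ^ 2 := by ring
  refine ⟨hbound, ?_⟩
  calc ∑ y ∈ univ.erase x, ctqwP G t x y
      ≤ #(univ.erase x) • (4 / (n : ℝ) ^ 2) :=
        sum_le_card_nsmul _ _ _ fun y hy ↦ hbound y (ne_of_mem_erase hy)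
    _ = (n - 1 : ℕ) * (4 / (n : ℝ) ^ 2) := by simp
    _ ≤ n * (4 / (n : ℝ) ^ 2) := by gcongr; exact Nat.sub_le n 1
    _ = 4 / n := by field_simp
end
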